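/- arXiv:2002.06863 — 4 statements merged into one kernel-verified Lean document; each statement's English description precedes it below -/
import Mathlib

section
/- There exists a market that admits an optimal dynamic pricing but admits no Walrasian equilibrium. Concretely, the market with 7 items {a_1, a_2, b_1, b_2, α_1, α_2, β} and 4 budget-additive buyers c_1, c_2, d_1, d_2, each with budget 2 — where for i ∈ {1,2}, buyer c_i has item values 1 for a_i, b_i, α_i and 0 otherwise, and buyer d_i has item value 2 for β, 1 for a_i and b_i, and 0 otherwise — admits an optimal dynamic pricing but no Walrasian equilibrium. -/
/-!
At prices `1` on `a₁, a₂, b₁, b₂, β` and `1/2` on `α₁, α₂`, buyer `cᵢ` demands `αᵢ` together with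
at most one of `aᵢ, bᵢ`, and `dᵢ` demands only `β`; each of these bundles occurs in an allocation
of welfare `7`, and `7` is optimal because one of `d₁, d₂` misses `β`. A Walrasian equilibrium
would make the integral welfare optimum also an optimum of the linear relaxation, but giving every
buyer each of two bundles (`{aᵢ, αᵢ}, {bᵢ, αᵢ}` to `cᵢ`, `{β}, {aᵢ, bᵢ}` to `dᵢ`) with weight
`1/2` yields welfare `8`.
-/

open Finset

section Defs

variable {M : Type*} [Fintype M] [DecidableEq M] {ι : Type*} [Fintype ι]

/-- A valuation is monotone. -/
def MonotoneVal (v : Finset M → ℝ) : Prop :=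
  ∀ ⦃S T : Finset M⦄, S ⊆ T → v S ≤ v T

/-- Quasi-linear utility of a bundle `S` at prices `p`. -/
def util (v : Finset M → ℝ) (p : M → ℝ) (S : Finset M) : ℝ :=
  v S - ∑ x ∈ S, p x

/-- `S` is a utility-maximizing bundle for valuation `v` at prices `p`. -/
def InDemand (v : Finset M → ℝ) (p : M → ℝ) (S : Finset M) : Prop :=
  ∀ T : Finset M, util v p T ≤ util v p S

/-- Gross-substitutes valuation. -/
def GrossSubstitutes (v : Finset M → ℝ) : Prop :=
  ∀ p q : M → ℝ, (∀ x, 0 ≤ p x) → (∀ x, 0 ≤ q x) → (∀ x, p x ≤ q x) →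
    ∀ A : Finset M, InDemand v p A →
      ∃ B : Finset M, InDemand v q B ∧ ∀ x ∈ A, p x = q x → x ∈ B

/-- `v` is a `k`-demand (multi-demand) valuation:
`v S` is the maximum of `∑_{x ∈ T} v {x}` over `T ⊆ S` with `|T| ≤ k`. -/
def MultiDemand (v : Finset M → ℝ) (k : ℕ) : Prop :=
  ∀ S : Finset M,
    IsGreatest {t : ℝ | ∃ T ⊆ S, T.card ≤ k ∧ t = ∑ x ∈ T, v {x}} (v S)

/-- `v` is a unit-demand valuation: `v ∅ = 0` and `v S = max_{x ∈ S} v {x}`. -/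
def UnitDemand (v : Finset M → ℝ) : Prop :=
  v ∅ = 0 ∧ ∀ S : Finset M, S.Nonempty →
    IsGreatest {t : ℝ | ∃ x ∈ S, t = v {x}} (v S)

/-- An allocation: a family of pairwise disjoint bundles. -/
def IsAlloc (A : ι → Finset M) : Prop :=
  ∀ i j : ι, i ≠ j → Disjoint (A i) (A j)

/-- Social welfare of an allocation. -/
def SW (v : ι → Finset M → ℝ) (A : ι → Finset M) : ℝ :=
  ∑ i, v i (A i)

/-- An optimal allocation: it maximizes social welfare among allocations. -/
def IsOptimalAlloc (v : ι → Finset M → ℝ) (A : ι → Finset M) : Prop :=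
  IsAlloc A ∧ ∀ B : ι → Finset M, IsAlloc B → SW v B ≤ SW v A

/-- `p` is an optimal dynamic pricing: every demanded bundle of every buyer is
her bundle in some optimal allocation. -/
def IsDynamicPricing (v : ι → Finset M → ℝ) (p : M → ℝ) : Prop :=
  (∀ x, 0 ≤ p x) ∧
  ∀ (i : ι) (S : Finset M), InDemand (v i) p S →
    ∃ A : ι → Finset M, IsOptimalAlloc v A ∧ A i = S

/-- Walrasian equilibrium: every buyer gets a demanded bundle and unallocated
items have price 0. -/
def IsWalrasianEq (v : ι → Finset M → ℝ) (A : ι → Finset M) (p : M → ℝ) : Prop :=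
  (∀ x, 0 ≤ p x) ∧ IsAlloc A ∧ (∀ i, InDemand (v i) p (A i)) ∧
  ∀ x : M, (∀ i, x ∉ A i) → p x = 0

/-- Item `x` is legal for buyer `i`: some optimal allocation gives `x` to `i`. -/
def LegalItem (v : ι → Finset M → ℝ) (i : ι) (x : M) : Prop :=
  ∃ A : ι → Finset M, IsOptimalAlloc v A ∧ x ∈ A i

/-- A bundle `S` is legal for buyer `i`: `|S| = k i` and every item of `S` is legal for `i`. -/
def LegalBundle (v : ι → Finset M → ℝ) (k : ι → ℕ) (i : ι) (S : Finset M) : Prop :=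
  S.card = k i ∧ ∀ x ∈ S, LegalItem v i x

/-- A legal allocation: every buyer's bundle is legal for her. -/
def LegalAlloc (v : ι → Finset M → ℝ) (k : ι → ℕ) (A : ι → Finset M) : Prop :=
  IsAlloc A ∧ ∀ i, LegalBundle v k i (A i)

/-- Submodularity condition (SM). -/
def SMcond (v : Finset M → ℝ) : Prop :=
  ∀ (x y : M) (S : Finset M), x ≠ y → x ∉ S → y ∉ S →
    v S + v (S ∪ {x, y}) ≤ v (S ∪ {x}) + v (S ∪ {y})

/-- Condition (RGP). -/
def RGPcond (v : Finset M → ℝ) : Prop :=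
  ∀ (x y z : M) (S : Finset M), x ≠ y → x ≠ z → y ≠ z → x ∉ S → y ∉ S → z ∉ S →
    v (S ∪ {x}) + v (S ∪ {y, z}) ≤
      max (v (S ∪ {y}) + v (S ∪ {x, z})) (v (S ∪ {z}) + v (S ∪ {x, y}))

/-- Condition (NP-SM) with nonnegative prices. -/
def NPSM (v : Finset M → ℝ) : Prop :=
  ¬ ∃ (p : M → ℝ) (x y : M) (S : Finset M),
      (∀ a, 0 ≤ p a) ∧ x ≠ y ∧ x ∉ S ∧ y ∉ S ∧ 0 < p x ∧ 0 < p y ∧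
      InDemand v p S ∧ InDemand v p (S ∪ {x, y}) ∧
      ∀ C : Finset M, InDemand v p C → (C ⊆ S ∨ ∃ T ⊆ S, C = T ∪ {x, y})

/-- Condition (NP-RGP) with nonnegative prices. -/
def NPRGP (v : Finset M → ℝ) : Prop :=
  ¬ ∃ (p : M → ℝ) (x y z : M) (S : Finset M),
      (∀ a, 0 ≤ p a) ∧ x ≠ y ∧ x ≠ z ∧ y ≠ z ∧ x ∉ S ∧ y ∉ S ∧ z ∉ S ∧
      0 < p x ∧ 0 < p y ∧ 0 < p z ∧
      InDemand v p (S ∪ {x}) ∧ InDemand v p (S ∪ {y, z}) ∧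
      ∀ C : Finset M, InDemand v p C →
        ((∃ T ⊆ S, C = T ∪ {x}) ∨ ∃ T ⊆ S, C = T ∪ {y, z})

end Defs

/-- Item values of the budget-additive market of Appendix D.
Items: 0 = a₁, 1 = a₂, 2 = b₁, 3 = b₂, 4 = α₁, 5 = α₂, 6 = β.
Buyers: 0 = c₁, 1 = c₂, 2 = d₁, 3 = d₂. -/
def baItemVal : Fin 4 → Fin 7 → ℝ :=
  ![![1, 0, 1, 0, 1, 0, 0],
    ![0, 1, 0, 1, 0, 1, 0],
    ![1, 0, 1, 0, 0, 0, 2],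
    ![0, 1, 0, 1, 0, 0, 2]]

/-- Budget-additive valuations with budget 2. -/
def baVal (i : Fin 4) (S : Finset (Fin 7)) : ℝ :=
  min 2 (∑ x ∈ S, baItemVal i x)

section WalrasianEquilibrium

variable {M : Type*} [Fintype M] [DecidableEq M] {ι : Type*} [Fintype ι]
  {v : ι → Finset M → ℝ} {A : ι → Finset M} {p : M → ℝ}

theorem IsWalrasianEq.sum_util_eq (hWE : IsWalrasianEq v A p) :
    ∑ i, util (v i) p (A i) = SW v A - ∑ x, p x := by
  obtain ⟨-, hA, -, hfree⟩ := hWE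
  have hpaid : ∑ i, ∑ x ∈ A i, p x = ∑ x, p x := by
    rw [← sum_biUnion fun i _ j _ hij => hA i j hij]
    refine sum_subset (subset_univ _) fun x _ hx => hfree x fun i hxi => hx ?_
    exact mem_biUnion.mpr ⟨i, mem_univ i, hxi⟩
  simp only [util, sum_sub_distrib, SW, hpaid]

/-- A Walrasian equilibrium allocation beats every fractional allocation, in which bundle `T k`
goes to buyer `b k` with weight `w k`, every buyer receives total weight one and every item is
used with total weight at most one. -/
theorem IsWalrasianEq.sum_mul_le_SW {κ : Type*} [Fintype κ] [DecidableEq ι]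
    (hWE : IsWalrasianEq v A p) (b : κ → ι) (T : κ → Finset M) (w : κ → ℝ) (hw : ∀ k, 0 ≤ w k)
    (hbuyer : ∀ i, ∑ k with b k = i, w k = 1) (hitem : ∀ x, ∑ k with x ∈ T k, w k ≤ 1) :
    ∑ k, w k * v (b k) (T k) ≤ SW v A := by
  have hdemand : ∀ k, w k * (v (b k) (T k) - ∑ x ∈ T k, p x) ≤
      w k * util (v (b k)) p (A (b k)) :=
    fun k => mul_le_mul_of_nonneg_left (hWE.2.2.1 (b k) (T k)) (hw k)
  have hutil : ∑ k, w k * util (v (b k)) p (A (b k)) = SW v A - ∑ x, p x := by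
    rw [← hWE.sum_util_eq, ← sum_fiberwise univ b]
    refine sum_congr rfl fun i _ => ?_
    rw [sum_congr rfl fun k hk => by rw [(mem_filter.mp hk).2], ← sum_mul, hbuyer i, one_mul]
  have hpaid : ∑ k, w k * ∑ x ∈ T k, p x ≤ ∑ x, p x :=
    calc ∑ k, w k * ∑ x ∈ T k, p x = ∑ x, p x * ∑ k with x ∈ T k, w k := by
          simp only [mul_sum, sum_filter, mul_ite, mul_zero]
          rw [sum_comm]
          refine sum_congr rfl fun k _ => ?_
          rw [← sum_filter, filter_mem_eq_inter, univ_inter]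
          exact sum_congr rfl fun x _ => mul_comm _ _
      _ ≤ ∑ x, p x := sum_le_sum fun x _ => mul_le_of_le_one_right (hWE.1 x) (hitem x)
  calc ∑ k, w k * v (b k) (T k)
      = ∑ k, w k * (v (b k) (T k) - ∑ x ∈ T k, p x) + ∑ k, w k * ∑ x ∈ T k, p x := by
        rw [← sum_add_distrib]
        exact sum_congr rfl fun k _ => by ring
    _ ≤ ∑ k, w k * util (v (b k)) p (A (b k)) + ∑ x, p x :=
        add_le_add (sum_le_sum fun k _ => hdemand k) hpaid
    _ = SW v A := by rw [hutil, sub_add_cancel]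

end WalrasianEquilibrium

theorem sum_add_sum_le_sum_of_disjoint {M β : Type*} [Fintype M] [DecidableEq M]
    [AddCommMonoid β] [PartialOrder β] [IsOrderedAddMonoid β] {f g : M → β} {S T : Finset M}
    (hf : ∀ x, 0 ≤ f x) (hST : Disjoint S T) (hgf : ∀ x ∈ T, g x ≤ f x) :
    ∑ x ∈ S, f x + ∑ x ∈ T, g x ≤ ∑ x, f x :=
  calc ∑ x ∈ S, f x + ∑ x ∈ T, g x ≤ ∑ x ∈ S ∪ T, f x := by
        rw [sum_union hST]; exact add_le_add le_rfl (sum_le_sum hgf)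
    _ ≤ ∑ x, f x := sum_le_univ_sum_of_nonneg hf

lemma baVal_le_two (i : Fin 4) (S : Finset (Fin 7)) : baVal i S ≤ 2 := min_le_left _ _

/-- Without `β`, buyer `dⱼ` values every item at most as much as `cⱼ`, whose values sum to 3. -/
lemma baVal_add_baVal_le_three {c d : Fin 4} (hcd : c = 0 ∧ d = 2 ∨ c = 1 ∧ d = 3)
    {S T : Finset (Fin 7)} (hST : Disjoint S T) (hβ : 6 ∉ T) : baVal c S + baVal d T ≤ 3 := by
  have hle : ∀ x ∈ T, baItemVal d x ≤ baItemVal c x := fun x hx => by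
    have hx6 : x ≠ 6 := ne_of_mem_of_not_mem hx hβ
    rcases hcd with ⟨rfl, rfl⟩ | ⟨rfl, rfl⟩ <;> fin_cases x <;> simp_all [baItemVal]
  have hnonneg : ∀ x, 0 ≤ baItemVal c x := fun x => by
    rcases hcd with ⟨rfl, -⟩ | ⟨rfl, -⟩ <;> fin_cases x <;> simp [baItemVal]
  have hsum : ∑ x, baItemVal c x = 3 := by
    rcases hcd with ⟨rfl, -⟩ | ⟨rfl, -⟩ <;> simp [Fin.sum_univ_seven, baItemVal] <;> norm_num
  calc baVal c S + baVal d T ≤ ∑ x ∈ S, baItemVal c x + ∑ x ∈ T, baItemVal d x :=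
        add_le_add (min_le_right _ _) (min_le_right _ _)
    _ ≤ 3 := hsum ▸ sum_add_sum_le_sum_of_disjoint hnonneg hST hle

lemma SW_le_seven {B : Fin 4 → Finset (Fin 7)} (hB : IsAlloc B) : SW baVal B ≤ 7 := by
  rw [SW, Fin.sum_univ_four]
  by_cases hβ : 6 ∈ B 2
  · have hβ' : 6 ∉ B 3 := disjoint_left.mp (hB 2 3 (by decide)) hβ
    linarith [baVal_add_baVal_le_three (.inr ⟨rfl, rfl⟩) (hB 1 3 (by decide)) hβ',
      baVal_le_two 0 (B 0), baVal_le_two 2 (B 2)]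
  · linarith [baVal_add_baVal_le_three (.inl ⟨rfl, rfl⟩) (hB 0 2 (by decide)) hβ,
      baVal_le_two 1 (B 1), baVal_le_two 3 (B 3)]

/-- Twice the item values and prices, so that demands can be decided over `ℤ`. -/
def dblItemVal : Fin 4 → Fin 7 → ℤ :=
  ![![2, 0, 2, 0, 2, 0, 0],
    ![0, 2, 0, 2, 0, 2, 0],
    ![2, 0, 2, 0, 0, 0, 4],
    ![0, 2, 0, 2, 0, 0, 4]]

def dblPrice : Fin 7 → ℤ := ![2, 2, 2, 2, 1, 1, 2]

def dblVal (i : Fin 4) (S : Finset (Fin 7)) : ℤ := min 4 (∑ x ∈ S, dblItemVal i x)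

def dblUtil (i : Fin 4) (S : Finset (Fin 7)) : ℤ := dblVal i S - ∑ x ∈ S, dblPrice x

noncomputable def price : Fin 7 → ℝ := ![1, 1, 1, 1, 1 / 2, 1 / 2, 1]

lemma price_eq (x : Fin 7) : price x = dblPrice x / 2 := by
  fin_cases x <;> norm_num [price, dblPrice]

lemma baVal_eq (i : Fin 4) (S : Finset (Fin 7)) : baVal i S = dblVal i S / 2 := by
  have hw : ∀ x, baItemVal i x = dblItemVal i x / 2 := fun x => by
    fin_cases i <;> fin_cases x <;> norm_num [baItemVal, dblItemVal]
  simp only [baVal, dblVal, hw, ← sum_div, Int.cast_min, Int.cast_sum]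
  rw [← min_div_div_right zero_le_two]
  norm_num

lemma util_price_eq (i : Fin 4) (S : Finset (Fin 7)) :
    util (baVal i) price S = dblUtil i S / 2 := by
  simp only [util, dblUtil, baVal_eq, price_eq, ← sum_div, Int.cast_sub, Int.cast_sum, sub_div]

lemma SW_eq (A : Fin 4 → Finset (Fin 7)) : SW baVal A = (∑ i, dblVal i (A i) : ℤ) / 2 := by
  simp only [SW, baVal_eq, ← sum_div, Int.cast_sum]

def witnessAlloc : Fin 6 → Fin 4 → Finset (Fin 7) :=
  ![![{4}, {1, 5}, {0, 2}, {6}], ![{0, 4}, {1, 5}, {6}, {3}], ![{2, 4}, {1, 5}, {6}, {3}],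
    ![{0, 4}, {5}, {6}, {1, 3}], ![{0, 4}, {3, 5}, {6}, {1}], ![{0, 4}, {1, 5}, {2}, {6}]]

set_option maxRecDepth 100000 in
/-- Every demanded bundle does at least as well as the demanded bundles `{α₁}, {α₂}, {β}, {β}`;
the check runs over all `2⁷` bundles. -/
lemma exists_witnessAlloc_of_dblUtil_ge :
    ∀ i S, dblUtil i (![{4}, {5}, {6}, {6}] i) ≤ dblUtil i S → ∃ n, witnessAlloc n i = S := by
  decide

lemma isOptimalAlloc_witnessAlloc (n : Fin 6) : IsOptimalAlloc baVal (witnessAlloc n) := by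
  have hdisj : ∀ n, IsAlloc (witnessAlloc n) := by
    unfold IsAlloc
    decide
  have hSW : ∀ n, ∑ i, dblVal i (witnessAlloc n i) = 14 := by decide
  refine ⟨hdisj n, fun B hB => ?_⟩
  rw [SW_eq (witnessAlloc n), hSW n]
  norm_num [SW_le_seven hB]

lemma isDynamicPricing_price : IsDynamicPricing baVal price := by
  refine ⟨fun x => ?_, fun i S hS => ?_⟩
  · fin_cases x <;> norm_num [price]
  · have hge : dblUtil i (![{4}, {5}, {6}, {6}] i) ≤ dblUtil i S := by
      have := hS (![{4}, {5}, {6}, {6}] i)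
      rw [util_price_eq, util_price_eq] at this
      exact_mod_cast (div_le_div_iff_of_pos_right two_pos).mp this
    obtain ⟨n, rfl⟩ := exists_witnessAlloc_of_dblUtil_ge i S hge
    exact ⟨witnessAlloc n, isOptimalAlloc_witnessAlloc n, rfl⟩

def fracBuyer : Fin 8 → Fin 4 := ![0, 0, 1, 1, 2, 2, 3, 3]

def fracBundle : Fin 8 → Finset (Fin 7) :=
  ![{0, 4}, {2, 4}, {1, 5}, {3, 5}, {6}, {0, 2}, {6}, {1, 3}]

lemma not_isWalrasianEq (A : Fin 4 → Finset (Fin 7)) (p : Fin 7 → ℝ) :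
    ¬ IsWalrasianEq baVal A p := by
  intro hWE
  have hbuyer : ∀ i, #{k | fracBuyer k = i} = 2 := by decide
  have hitem : ∀ x, #{k | x ∈ fracBundle k} ≤ 2 := by decide
  have hfrac : ∑ k, dblVal (fracBuyer k) (fracBundle k) = 32 := by decide
  have hle := hWE.sum_mul_le_SW fracBuyer fracBundle (fun _ => 1 / 2) (fun _ => by norm_num)
    (fun i => by simp [hbuyer i]) (fun x => by
      have : (#{k | x ∈ fracBundle k} : ℝ) ≤ 2 := by exact_mod_cast hitem x
      simp only [sum_const, nsmul_eq_mul]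
      linarith)
  simp only [baVal_eq, ← mul_sum, ← sum_div] at hle
  rw [← Int.cast_sum, hfrac] at hle
  linarith [SW_le_seven hWE.2.1]

/-- The budget-additive market above admits an optimal dynamic
pricing but no Walrasian equilibrium. -/
theorem budget_additive_dp_without_walrasian :
    (∃ p : Fin 7 → ℝ, IsDynamicPricing baVal p) ∧
    ¬ ∃ (A : Fin 4 → Finset (Fin 7)) (p : Fin 7 → ℝ), IsWalrasianEq baVal A p :=
  ⟨⟨price, isDynamicPricing_price⟩, fun ⟨A, p, hWE⟩ => not_isWalrasianEq A p hWE⟩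
end

section
/- Let v be a monotone, normalized valuation on a finite set M, and suppose submodularity fails at some distinct items x,y and bundle S ⊆ M∖{x,y}, i.e., v(S∪{x}) + v(S∪{y}) < v(S) + v(S∪{x,y}). Then there exists a nonnegative price vector p with p_x > 0 and p_y > 0 such that both S and S∪{x,y} are in the demand D_p(v), and every bundle in D_p(v) is of the form T or T∪{x,y} for some T ⊆ S. -/
open Finset

/-- If submodularity fails at `(S, x, y)`, then there is a
nonnegative price vector witnessing the violation of (NP-SM). -/
theorem sm_failure_gives_npsm_violation
    {M : Type*} [Fintype M] [DecidableEq M]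
    (v : Finset M → ℝ) (hmono : MonotoneVal v) (hnorm : v ∅ = 0)
    (x y : M) (S : Finset M) (hxy : x ≠ y) (hxS : x ∉ S) (hyS : y ∉ S)
    (hfail : v (S ∪ {x}) + v (S ∪ {y}) < v S + v (S ∪ {x, y})) :
    ∃ p : M → ℝ, (∀ a, 0 ≤ p a) ∧ 0 < p x ∧ 0 < p y ∧
      InDemand v p S ∧ InDemand v p (S ∪ {x, y}) ∧
      ∀ C : Finset M, InDemand v p C → (C ⊆ S ∨ ∃ T ⊆ S, C = T ∪ {x, y}) := by
  
  classical
  set ε : ℝ := (v S + v (S ∪ {x, y}) - v (S ∪ {x}) - v (S ∪ {y})) / 2 with hε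
  have hε0 : 0 < ε := by rw [hε]; linarith
  set px : ℝ := v (S ∪ {x}) - v S + ε with hpxdef
  set py : ℝ := v (S ∪ {x, y}) - v (S ∪ {x}) - ε with hpydef
  have hxle : v S ≤ v (S ∪ {x}) := hmono Finset.subset_union_left
  have hyle : v S ≤ v (S ∪ {y}) := hmono Finset.subset_union_left
  have hxxy : v (S ∪ {x}) ≤ v (S ∪ {x, y}) := by
    refine hmono (Finset.union_subset_union_right ?_)
    intro a ha
    simp only [Finset.mem_singleton] at ha
    simp [ha]
  have hpx0 : 0 < px := by rw [hpxdef]; linarith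
  have hpy0 : 0 < py := by rw [hpydef, hε]; linarith
  set H : ℝ := v Finset.univ - v S + 1 with hHdef
  have hH0 : 0 < H := by
    have := hmono (Finset.subset_univ S); rw [hHdef]; linarith
  set p : M → ℝ := fun a => if a = x then px else if a = y then py else if a ∈ S then 0 else H
    with hpdef
  have hp0 : ∀ a, 0 ≤ p a := by
    intro a
    simp only [hpdef]
    split_ifs <;> first | exact le_of_lt hpx0 | exact le_of_lt hpy0 | rfl | exact le_of_lt hH0
  have hpSz : ∀ a ∈ S, p a = 0 := by
    intro a ha
    have hax : a ≠ x := fun e => hxS (e ▸ ha)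
    have hay : a ≠ y := fun e => hyS (e ▸ ha)
    simp [hpdef, hax, hay, ha]
  have hsumS : ∀ T ⊆ S, ∑ a ∈ T, p a = 0 := fun T hT =>
    Finset.sum_eq_zero fun a ha => hpSz a (hT ha)
  have hsum : ∀ C ⊆ S ∪ {x, y}, ∑ a ∈ C, p a =
      (if x ∈ C then px else 0) + (if y ∈ C then py else 0) := by
    intro C hC
    have hcong : ∑ a ∈ C, p a =
        ∑ a ∈ C, ((if a = x then px else 0) + (if a = y then py else 0)) := by
      refine Finset.sum_congr rfl fun a ha => ?_
      rcases Finset.mem_union.1 (hC ha) with h | h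
      · have hax : a ≠ x := fun e => hxS (e ▸ h)
        have hay : a ≠ y := fun e => hyS (e ▸ h)
        simp [hpdef, hax, hay, h]
      · simp only [Finset.mem_insert, Finset.mem_singleton] at h
        rcases h with rfl | rfl
        · simp [hpdef, hxy]
        · simp [hpdef, hxy.symm]
    rw [hcong, Finset.sum_add_distrib, Finset.sum_ite_eq' C x fun _ => px,
      Finset.sum_ite_eq' C y fun _ => py]
  have huS : util v p S = v S := by
    unfold util; rw [hsumS S le_rfl]; ring
  have hsumxy : ∑ a ∈ S ∪ {x, y}, p a = px + py := by
    rw [hsum _ le_rfl]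
    have hx : x ∈ S ∪ {x, y} := by simp
    have hy : y ∈ S ∪ {x, y} := by simp
    simp [hx, hy]
  have huSxy : util v p (S ∪ {x, y}) = v S := by
    unfold util; rw [hsumxy, hpxdef, hpydef]; ring
  -- key bound
  have key : ∀ C : Finset M, util v p C ≤ v S ∧
      (util v p C = v S → (C ⊆ S ∨ ∃ T ⊆ S, C = T ∪ {x, y})) := by
    intro C
    by_cases hC : C ⊆ S ∪ {x, y}
    · by_cases hx : x ∈ C <;> by_cases hy : y ∈ C
      · -- both x and y in C
        have hCxy : v C ≤ v (S ∪ {x, y}) := hmono hC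
        have hu : util v p C = v C - (px + py) := by
          unfold util; rw [hsum C hC]; simp [hx, hy]
        constructor
        · rw [hu, hpxdef, hpydef]; linarith
        · intro _
          right
          refine ⟨C \ {x, y}, ?_, ?_⟩
          · intro a ha
            simp only [Finset.mem_sdiff, Finset.mem_insert, Finset.mem_singleton] at ha
            rcases Finset.mem_union.1 (hC ha.1) with h | h
            · exact h
            · simp only [Finset.mem_insert, Finset.mem_singleton] at h
              exact absurd h (by tauto)
          · have hsub : ({x, y} : Finset M) ⊆ C := by
              intro a ha
              simp only [Finset.mem_insert, Finset.mem_singleton] at ha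
              rcases ha with rfl | rfl <;> assumption
            rw [Finset.sdiff_union_self_eq_union, Finset.union_eq_left.2 hsub]
      · -- x in C, y not
        have hCx : C ⊆ S ∪ {x} := by
          intro a ha
          rcases Finset.mem_union.1 (hC ha) with h | h
          · exact Finset.mem_union.2 (Or.inl h)
          · simp only [Finset.mem_insert, Finset.mem_singleton] at h
            rcases h with rfl | rfl
            · exact Finset.mem_union.2 (Or.inr (Finset.mem_singleton_self _))
            · exact absurd ha hy
        have hCxv : v C ≤ v (S ∪ {x}) := hmono hCx
        have hu : util v p C = v C - px := by
          unfold util; rw [hsum C hC]; simp [hx, hy]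
        constructor
        · rw [hu, hpxdef]; linarith
        · intro heq; exfalso; rw [hu, hpxdef] at heq; linarith
      · -- y in C, x not
        have hCy : C ⊆ S ∪ {y} := by
          intro a ha
          rcases Finset.mem_union.1 (hC ha) with h | h
          · exact Finset.mem_union.2 (Or.inl h)
          · simp only [Finset.mem_insert, Finset.mem_singleton] at h
            rcases h with rfl | rfl
            · exact absurd ha hx
            · exact Finset.mem_union.2 (Or.inr (Finset.mem_singleton_self _))
        have hCyv : v C ≤ v (S ∪ {y}) := hmono hCy
        have hu : util v p C = v C - py := by
          unfold util; rw [hsum C hC]; simp [hx, hy]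
        constructor
        · rw [hu, hpydef, hε]; linarith
        · intro heq; exfalso; rw [hu, hpydef, hε] at heq; linarith
      · -- neither
        have hCS : C ⊆ S := by
          intro a ha
          rcases Finset.mem_union.1 (hC ha) with h | h
          · exact h
          · simp only [Finset.mem_insert, Finset.mem_singleton] at h
            rcases h with rfl | rfl
            · exact absurd ha hx
            · exact absurd ha hy
        have hu : util v p C = v C := by
          unfold util; rw [hsumS C hCS]; ring
        exact ⟨by rw [hu]; exact hmono hCS, fun _ => Or.inl hCS⟩
    · -- C contains an element outside S ∪ {x, y}
      obtain ⟨a, haC, haO⟩ := Finset.not_subset.1 hC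
      have hpa : p a = H := by
        have hax : a ≠ x := fun e => haO (by simp [e])
        have hay : a ≠ y := fun e => haO (by simp [e])
        have haS : a ∉ S := fun h => haO (Finset.mem_union.2 (Or.inl h))
        simp [hpdef, hax, hay, haS]
      have hsge : H ≤ ∑ b ∈ C, p b := by
        rw [← hpa]
        exact Finset.single_le_sum (fun b _ => hp0 b) haC
      have hCv : v C ≤ v Finset.univ := hmono (Finset.subset_univ C)
      have hlt : util v p C < v S := by
        unfold util; rw [hHdef] at hsge; linarith
      exact ⟨le_of_lt hlt, fun heq => absurd heq (by linarith)⟩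
  refine ⟨p, hp0, ?_, ?_, ?_, ?_, ?_⟩
  · show 0 < p x; simp [hpdef, hpx0]
  · show 0 < p y; simp [hpdef, hxy.symm, hpy0]
  · intro T; rw [huS]; exact (key T).1
  · intro T; rw [huSxy]; exact (key T).1
  · intro C hCdem
    have h1 : util v p C ≤ v S := (key C).1
    have h2 : v S ≤ util v p C := huS ▸ hCdem S
    exact (key C).2 (le_antisymm h1 h2)
end

section
/- Let v be a monotone, normalized, submodular valuation on a finite set M (submodular: v(S∪{x}) + v(S∪{y}) ≥ v(S) + v(S∪{x,y}) for all distinct x,y and S ⊆ M∖{x,y}), and suppose condition (RGP) fails at distinct items x,y,z and a bundle S ⊆ M∖{x,y,z}: v(S∪{x}) + v(S∪{y,z}) > v(S∪{y}) + v(S∪{x,z}) and v(S∪{x}) + v(S∪{y,z}) > v(S∪{z}) + v(S∪{x,y}). Then there exists a nonnegative price vector p with p_x, p_y, p_z > 0 such that both S∪{x} and S∪{y,z} are in the demand D_p(v), and every bundle in D_p(v) is of the form T∪{x} or T∪{y,z} for some T ⊆ S. -/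
open Finset

set_option maxHeartbeats 1600000 in
/-- If `v` is submodular and (RGP) fails at `(S, x, y, z)`, then
there is a nonnegative price vector witnessing the violation of (NP-RGP). -/
theorem rgp_failure_gives_nprgp_violation
    {M : Type*} [Fintype M] [DecidableEq M]
    (v : Finset M → ℝ) (hmono : MonotoneVal v) (hnorm : v ∅ = 0)
    (hsm : SMcond v)
    (x y z : M) (S : Finset M)
    (hxy : x ≠ y) (hxz : x ≠ z) (hyz : y ≠ z)
    (hxS : x ∉ S) (hyS : y ∉ S) (hzS : z ∉ S)
    (hfail1 : v (S ∪ {y}) + v (S ∪ {x, z}) < v (S ∪ {x}) + v (S ∪ {y, z}))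
    (hfail2 : v (S ∪ {z}) + v (S ∪ {x, y}) < v (S ∪ {x}) + v (S ∪ {y, z})) :
    ∃ p : M → ℝ, (∀ a, 0 ≤ p a) ∧ 0 < p x ∧ 0 < p y ∧ 0 < p z ∧
      InDemand v p (S ∪ {x}) ∧ InDemand v p (S ∪ {y, z}) ∧
      ∀ C : Finset M, InDemand v p C →
        ((∃ T ⊆ S, C = T ∪ {x}) ∨ ∃ T ⊆ S, C = T ∪ {y, z}) := by

  classical
  have hset1 : (S ∪ {z}) ∪ {x, y} = S ∪ {x, y, z} := by ext a; simp; tauto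
  have hset2 : (S ∪ {z}) ∪ {x} = S ∪ {x, z} := by ext a; simp; tauto
  have hset3 : (S ∪ {z}) ∪ {y} = S ∪ {y, z} := by ext a; simp; tauto
  have sm3 : v S + v (S ∪ {y, z}) ≤ v (S ∪ {y}) + v (S ∪ {z}) := hsm y z S hyz hyS hzS
  have sm4 : v (S ∪ {z}) + v (S ∪ {x, y, z}) ≤ v (S ∪ {x, z}) + v (S ∪ {y, z}) := by
    have h := hsm x y (S ∪ {z}) hxy (by simp [hxS, hxz]) (by simp [hyS, hyz])
    rwa [hset1, hset2, hset3] at h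
  have m1 : v (S ∪ {x}) ≤ v (S ∪ {x, y}) := hmono (by intro a ha; simp at ha ⊢; tauto)
  have m2 : v (S ∪ {x}) ≤ v (S ∪ {x, z}) := hmono (by intro a ha; simp at ha ⊢; tauto)
  have m3 : v (S ∪ {z}) ≤ v (S ∪ {x, z}) := hmono (by intro a ha; simp at ha ⊢; tauto)
  have m0 : 0 ≤ v S := by
    have := hmono (Finset.empty_subset S); rwa [hnorm] at this
  set Ly : ℝ := max 0 (v (S ∪ {x, y}) - v (S ∪ {x})) with hLydef
  set Lz : ℝ := max 0 (v (S ∪ {x, z}) - v (S ∪ {x})) with hLzdef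
  set Uy : ℝ := v (S ∪ {y, z}) - v (S ∪ {z}) with hUydef
  set Uz : ℝ := v (S ∪ {y, z}) - v (S ∪ {y}) with hUzdef
  set lo : ℝ := max (Ly + Lz)
      (max (v (S ∪ {y, z}) - v (S ∪ {x})) (v (S ∪ {x, y, z}) - v (S ∪ {x}))) with hlodef
  set s : ℝ := (lo + (Uy + Uz)) / 2 with hsdef
  set A : ℝ := max Ly (s - Uz) with hAdef
  set B : ℝ := min Uy (s - Lz) with hBdef
  set py : ℝ := (A + B) / 2 with hpydef
  set pz : ℝ := s - py with hpzdef
  set px : ℝ := v (S ∪ {x}) - v (S ∪ {y, z}) + s with hpxdef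
  have hLy0 : (0:ℝ) ≤ Ly := by rw [hLydef]; exact le_max_left _ _
  have hLz0 : (0:ℝ) ≤ Lz := by rw [hLzdef]; exact le_max_left _ _
  have hLyd : v (S ∪ {x, y}) - v (S ∪ {x}) ≤ Ly := by rw [hLydef]; exact le_max_right _ _
  have hLzd : v (S ∪ {x, z}) - v (S ∪ {x}) ≤ Lz := by rw [hLzdef]; exact le_max_right _ _
  have hLyUy : Ly < Uy := by
    rw [hLydef]; apply max_lt
    · linarith
    · linarith
  have hLzUz : Lz < Uz := by
    rw [hLzdef]; apply max_lt
    · linarith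
    · linarith
  have hloLL : Ly + Lz ≤ lo := by rw [hlodef]; exact le_max_left _ _
  have hlo2 : v (S ∪ {y, z}) - v (S ∪ {x}) ≤ lo := by
    rw [hlodef]; exact le_trans (le_max_left _ _) (le_max_right _ _)
  have hlo3 : v (S ∪ {x, y, z}) - v (S ∪ {x}) ≤ lo := by
    rw [hlodef]; exact le_trans (le_max_right _ _) (le_max_right _ _)
  have hlolt : lo < Uy + Uz := by
    rw [hlodef]; apply max_lt
    · linarith
    · apply max_lt
      · linarith
      · linarith
  have hlos : lo < s := by rw [hsdef]; linarith
  have hshi : s < Uy + Uz := by rw [hsdef]; linarith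
  have hAB : A < B := by
    rw [hAdef, hBdef]; apply max_lt
    · exact lt_min hLyUy (by linarith)
    · exact lt_min (by linarith) (by linarith)
  have hApy : A < py := by rw [hpydef]; linarith
  have hpyB : py < B := by rw [hpydef]; linarith
  have hpyLy : Ly < py := lt_of_le_of_lt (by rw [hAdef]; exact le_max_left _ _) hApy
  have hpysUz : s - Uz < py := lt_of_le_of_lt (by rw [hAdef]; exact le_max_right _ _) hApy
  have hpyUy : py < Uy := lt_of_lt_of_le hpyB (by rw [hBdef]; exact min_le_left _ _)
  have hpysLz : py < s - Lz := lt_of_lt_of_le hpyB (by rw [hBdef]; exact min_le_right _ _)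
  have hpy0 : 0 < py := lt_of_le_of_lt hLy0 hpyLy
  have hpzLz : Lz < pz := by rw [hpzdef]; linarith
  have hpz0 : 0 < pz := lt_of_le_of_lt hLz0 hpzLz
  have hpzUz : pz < Uz := by rw [hpzdef]; linarith
  have hpx0 : 0 < px := by rw [hpxdef]; linarith
  have hsc : s < v (S ∪ {y, z}) - v S := by linarith
  have hsl3 : v (S ∪ {x, y, z}) - v (S ∪ {x}) < s := lt_of_le_of_lt hlo3 hlos
  set H : ℝ := v Finset.univ + 1 with hHdef
  have hH1 : (1:ℝ) ≤ H := by
    have := hmono (Finset.empty_subset (Finset.univ : Finset M))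
    rw [hnorm] at this; rw [hHdef]; linarith
  set p : M → ℝ := fun a =>
    if a = x then px else if a = y then py else if a = z then pz
    else if a ∈ S then 0 else H with hpdef
  have hpxv : p x = px := by simp [hpdef]
  have hpyv : p y = py := by simp [hpdef, Ne.symm hxy]
  have hpzv : p z = pz := by simp [hpdef, Ne.symm hxz, Ne.symm hyz]
  have hpSv : ∀ a ∈ S, p a = 0 := by
    intro a ha
    have h1 : a ≠ x := fun h => hxS (h ▸ ha)
    have h2 : a ≠ y := fun h => hyS (h ▸ ha)
    have h3 : a ≠ z := fun h => hzS (h ▸ ha)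
    simp [hpdef, h1, h2, h3, ha]
  have hp0 : ∀ a, 0 ≤ p a := by
    intro a; simp only [hpdef]; split_ifs <;> linarith
  have hdisjx : Disjoint S ({x} : Finset M) :=
    Finset.disjoint_singleton_right.mpr hxS
  have hdisjyz : Disjoint S ({y, z} : Finset M) := by
    simp [Finset.disjoint_insert_right, Finset.disjoint_singleton_right, hyS, hzS]
  have hsumSyz : ∀ T' : Finset M, T' ⊆ S → ∑ a ∈ T' ∪ {y, z}, p a = s := by
    intro T' hT'
    have hd : Disjoint T' ({y, z} : Finset M) := by
      simp only [Finset.disjoint_insert_right, Finset.disjoint_singleton_right]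
      exact ⟨fun h => hyS (hT' h), fun h => hzS (hT' h)⟩
    rw [Finset.sum_union hd, Finset.sum_eq_zero (fun a ha => hpSv a (hT' ha)),
      Finset.sum_pair hyz, hpyv, hpzv, zero_add, hpzdef]; ring
  have hsumSx : ∀ T' : Finset M, T' ⊆ S → ∑ a ∈ T' ∪ {x}, p a = px := by
    intro T' hT'
    have hd : Disjoint T' ({x} : Finset M) :=
      Finset.disjoint_singleton_right.mpr (fun h => hxS (hT' h))
    rw [Finset.sum_union hd, Finset.sum_eq_zero (fun a ha => hpSv a (hT' ha)),
      Finset.sum_singleton, hpxv, zero_add]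
  have huSx : util v p (S ∪ {x}) = v (S ∪ {y, z}) - s := by
    simp only [util]; rw [hsumSx S le_rfl, hpxdef]; ring
  have huSyz : util v p (S ∪ {y, z}) = v (S ∪ {y, z}) - s := by
    simp only [util]; rw [hsumSyz S le_rfl]
  have hmain : ∀ T : Finset M,
      ((∃ T' ⊆ S, T = T' ∪ {x}) ∨ ∃ T' ⊆ S, T = T' ∪ {y, z}) ∨
        util v p T < v (S ∪ {y, z}) - s := by
    intro T
    by_cases hTs : T ⊆ S ∪ {x, y, z}
    · have hmem : ∀ a ∈ T, a ∈ S ∨ a = x ∨ a = y ∨ a = z := by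
        intro a ha; have := hTs ha; simp at this; tauto
      by_cases hxT : x ∈ T <;> by_cases hyT : y ∈ T <;> by_cases hzT : z ∈ T
      · -- x, y, z ∈ T
        right
        have hsub : ({x, y, z} : Finset M) ⊆ T := by
          intro a ha; simp at ha; rcases ha with rfl | rfl | rfl <;> assumption
        have h1 : ∑ a ∈ ({x, y, z} : Finset M), p a ≤ ∑ a ∈ T, p a :=
          Finset.sum_le_sum_of_subset_of_nonneg hsub (fun i _ _ => hp0 i)
        have h2 : ∑ a ∈ ({x, y, z} : Finset M), p a = px + py + pz := by
          rw [Finset.sum_insert (by simp [hxy, hxz]), Finset.sum_pair hyz, hpxv, hpyv, hpzv]; ring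
        have h3 : v T ≤ v (S ∪ {x, y, z}) := hmono hTs
        simp only [util]; rw [h2] at h1; linarith
      · -- x, y ∈ T, z ∉ T
        right
        have hsub : ({x, y} : Finset M) ⊆ T := by
          intro a ha; simp at ha; rcases ha with rfl | rfl <;> assumption
        have h1 : ∑ a ∈ ({x, y} : Finset M), p a ≤ ∑ a ∈ T, p a :=
          Finset.sum_le_sum_of_subset_of_nonneg hsub (fun i _ _ => hp0 i)
        have h2 : ∑ a ∈ ({x, y} : Finset M), p a = px + py := by
          rw [Finset.sum_pair hxy, hpxv, hpyv]
        have h3 : v T ≤ v (S ∪ {x, y}) := by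
          apply hmono; intro a ha
          rcases hmem a ha with h | rfl | rfl | rfl
          · exact Finset.mem_union_left _ h
          · simp
          · simp
          · exact absurd ha hzT
        simp only [util]; rw [h2] at h1; linarith
      · -- x, z ∈ T, y ∉ T
        right
        have hsub : ({x, z} : Finset M) ⊆ T := by
          intro a ha; simp at ha; rcases ha with rfl | rfl <;> assumption
        have h1 : ∑ a ∈ ({x, z} : Finset M), p a ≤ ∑ a ∈ T, p a :=
          Finset.sum_le_sum_of_subset_of_nonneg hsub (fun i _ _ => hp0 i)
        have h2 : ∑ a ∈ ({x, z} : Finset M), p a = px + pz := by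
          rw [Finset.sum_pair hxz, hpxv, hpzv]
        have h3 : v T ≤ v (S ∪ {x, z}) := by
          apply hmono; intro a ha
          rcases hmem a ha with h | rfl | rfl | rfl
          · exact Finset.mem_union_left _ h
          · simp
          · exact absurd ha hyT
          · simp
        simp only [util]; rw [h2] at h1; linarith
      · -- only x
        left; left
        refine ⟨T \ {x}, ?_, ?_⟩
        · intro a ha
          simp only [Finset.mem_sdiff, Finset.mem_singleton] at ha
          rcases hmem a ha.1 with h | rfl | rfl | rfl
          · exact h
          · exact absurd rfl ha.2
          · exact absurd ha.1 hyT
          · exact absurd ha.1 hzT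
        · ext a
          simp only [Finset.mem_union, Finset.mem_sdiff, Finset.mem_singleton]
          constructor
          · intro h
            by_cases hax : a = x
            · exact Or.inr hax
            · exact Or.inl ⟨h, hax⟩
          · rintro (⟨h, _⟩ | rfl)
            · exact h
            · exact hxT
      · -- y, z ∈ T, x ∉ T
        left; right
        refine ⟨T \ {y, z}, ?_, ?_⟩
        · intro a ha
          simp only [Finset.mem_sdiff, Finset.mem_insert, Finset.mem_singleton, not_or] at ha
          rcases hmem a ha.1 with h | rfl | rfl | rfl
          · exact h
          · exact absurd ha.1 hxT
          · exact absurd rfl ha.2.1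
          · exact absurd rfl ha.2.2
        · ext a
          simp only [Finset.mem_union, Finset.mem_sdiff, Finset.mem_insert,
            Finset.mem_singleton, not_or]
          constructor
          · intro h
            by_cases hay : a = y
            · exact Or.inr (Or.inl hay)
            · by_cases haz : a = z
              · exact Or.inr (Or.inr haz)
              · exact Or.inl ⟨h, hay, haz⟩
          · rintro (⟨h, _⟩ | rfl | rfl)
            · exact h
            · exact hyT
            · exact hzT
      · -- only y
        right
        have h1 : p y ≤ ∑ a ∈ T, p a := Finset.single_le_sum (fun i _ => hp0 i) hyT
        rw [hpyv] at h1
        have h3 : v T ≤ v (S ∪ {y}) := by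
          apply hmono; intro a ha
          rcases hmem a ha with h | rfl | rfl | rfl
          · exact Finset.mem_union_left _ h
          · exact absurd ha hxT
          · simp
          · exact absurd ha hzT
        simp only [util]; linarith
      · -- only z
        right
        have h1 : p z ≤ ∑ a ∈ T, p a := Finset.single_le_sum (fun i _ => hp0 i) hzT
        rw [hpzv] at h1
        have h3 : v T ≤ v (S ∪ {z}) := by
          apply hmono; intro a ha
          rcases hmem a ha with h | rfl | rfl | rfl
          · exact Finset.mem_union_left _ h
          · exact absurd ha hxT
          · exact absurd ha hyT
          · simp
        simp only [util]; linarith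
      · -- none of x, y, z
        right
        have h1 : (0:ℝ) ≤ ∑ a ∈ T, p a := Finset.sum_nonneg (fun i _ => hp0 i)
        have h3 : v T ≤ v S := by
          apply hmono; intro a ha
          rcases hmem a ha with h | rfl | rfl | rfl
          · exact h
          · exact absurd ha hxT
          · exact absurd ha hyT
          · exact absurd ha hzT
        simp only [util]; linarith
    · right
      obtain ⟨a0, ha0T, ha0⟩ := Finset.not_subset.mp hTs
      simp only [Finset.mem_union, Finset.mem_insert, Finset.mem_singleton, not_or] at ha0
      obtain ⟨hS0, hx0, hy0, hz0⟩ := ha0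
      have hpa : p a0 = H := by simp [hpdef, hx0, hy0, hz0, hS0]
      have h2 := Finset.single_le_sum (f := p) (fun i _ => hp0 i) ha0T
      rw [hpa] at h2
      have h3 : v T ≤ v Finset.univ := hmono (Finset.subset_univ T)
      simp only [util]; linarith
  have hdx : InDemand v p (S ∪ {x}) := by
    intro T
    rw [huSx]
    rcases hmain T with (⟨T', hT', rfl⟩ | ⟨T', hT', rfl⟩) | h
    · have h1 : v (T' ∪ {x}) ≤ v (S ∪ {x}) := hmono (Finset.union_subset_union_left hT')
      simp only [util]; rw [hsumSx T' hT']; linarith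
    · have h1 : v (T' ∪ {y, z}) ≤ v (S ∪ {y, z}) := hmono (Finset.union_subset_union_left hT')
      simp only [util]; rw [hsumSyz T' hT']; linarith
    · linarith
  have hdyz : InDemand v p (S ∪ {y, z}) := by
    intro T; rw [huSyz, ← huSx]; exact hdx T
  refine ⟨p, hp0, ?_, ?_, ?_, hdx, hdyz, ?_⟩
  · rw [hpxv]; exact hpx0
  · rw [hpyv]; exact hpy0
  · rw [hpzv]; exact hpz0
  · intro C hC
    rcases hmain C with h | h
    · exact h
    · exfalso
      have := hC (S ∪ {x})
      rw [huSx] at this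
      linarith
end

section
/- Let v be a monotone, normalized valuation on a finite set M. Suppose there exist a nonnegative price vector p, distinct items x,y and a bundle S ⊆ M∖{x,y} such that S and S∪{x,y} are both in the demand D_p(v) while S∪{x} and S∪{y} are not in D_p(v). Then submodularity fails at (S,x,y): v(S) + v(S∪{x,y}) > v(S∪{x}) + v(S∪{y}). -/
open Finset

/-- If at some nonnegative prices `S` and `S ∪ {x,y}` are
demanded while `S ∪ {x}` and `S ∪ {y}` are not, then submodularity fails at
`(S, x, y)`. -/
theorem demand_gives_sm_failure
    {M : Type*} [Fintype M] [DecidableEq M]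
    (v : Finset M → ℝ) (hmono : MonotoneVal v) (hnorm : v ∅ = 0)
    (p : M → ℝ) (hp : ∀ a, 0 ≤ p a)
    (x y : M) (S : Finset M) (hxy : x ≠ y) (hxS : x ∉ S) (hyS : y ∉ S)
    (hS : InDemand v p S) (hSxy : InDemand v p (S ∪ {x, y}))
    (hSx : ¬ InDemand v p (S ∪ {x})) (hSy : ¬ InDemand v p (S ∪ {y})) :
    v (S ∪ {x}) + v (S ∪ {y}) < v S + v (S ∪ {x, y}) := by
  obtain ⟨T1, hT1⟩ := not_forall.mp hSx
  obtain ⟨T2, hT2⟩ := not_forall.mp hSy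
  have h1 : util v p (S ∪ {x}) < util v p S :=
    lt_of_lt_of_le (lt_of_not_ge hT1) (hS T1)
  have h2 : util v p (S ∪ {y}) < util v p (S ∪ {x, y}) :=
    lt_of_lt_of_le (lt_of_not_ge hT2) (hSxy T2)
  have hsum := add_lt_add h1 h2
  have e1 : S ∪ {x} = insert x S := by ext a; simp [or_comm]
  have e2 : S ∪ {y} = insert y S := by ext a; simp [or_comm]
  have e3 : S ∪ {x, y} = insert x (insert y S) := by
    ext a; simp [or_comm, or_left_comm]
  have px : ∑ a ∈ S ∪ {x}, p a = p x + ∑ a ∈ S, p a := by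
    rw [e1, Finset.sum_insert hxS]
  have py : ∑ a ∈ S ∪ {y}, p a = p y + ∑ a ∈ S, p a := by
    rw [e2, Finset.sum_insert hyS]
  have pxy : ∑ a ∈ S ∪ {x, y}, p a = p x + (p y + ∑ a ∈ S, p a) := by
    rw [e3, Finset.sum_insert (by simp [hxy, hxS]), Finset.sum_insert hyS]
  simp only [util, px, py, pxy] at hsum
  linarith
end
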